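/- The covariance estimator is downward biased: under the stepped-wedge randomization, E[Ĉov] ≤ Cov(τ̂1, τ̂0), where Ĉov(σ) = −(1/N²)·Σ_{(i,j),(i′,j′) : e¹⁰ = 0} ( Z_{ij}·r1(i,j)²/(2e_j) + (1 − Z_{i′j′})·r0(i′,j′)²/(2(1 − e_{j′})) ) + (1/N²)·Σ_{(i,j) ≠ (i′,j′), e¹⁰ > 0} Z_{ij}·(1 − Z_{i′j′})·((e¹⁰_{(i,j),(i′,j′)} − e_j·(1 − e_{j′}))/(e¹⁰_{(i,j),(i′,j′)}·e_j·(1 − e_{j′})))·r1(i,j)·r0(i′,j′); here the first sum runs over all ordered pairs of cluster-periods (including (i,j) = (i′,j′)) with e¹⁰_{(i,j),(i′,j′)} = 0, and the second over ordered pairs of distinct cluster-periods with e¹⁰ > 0. -/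

import Mathlib

open Finset
open scoped Classical

noncomputable section

/-- Probability of an event under the uniform random permutation of `Fin I`
(each of the `I!` permutations has probability `1/I!`). -/
def swProb (I : ℕ) (p : Equiv.Perm (Fin I) → Prop) : ℝ :=
  ((Finset.univ.filter p).card : ℝ) / (Nat.factorial I : ℝ)

/-- Expectation of a real statistic under the uniform random permutation of `Fin I`. -/
def swExp (I : ℕ) (f : Equiv.Perm (Fin I) → ℝ) : ℝ :=
  (∑ σ : Equiv.Perm (Fin I), f σ) / (Nat.factorial I : ℝ)

/-- Variance with respect to the uniform random permutation. -/
def swVar (I : ℕ) (f : Equiv.Perm (Fin I) → ℝ) : ℝ :=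
  swExp I (fun σ => (f σ - swExp I f) ^ 2)

/-- Covariance with respect to the uniform random permutation. -/
def swCov (I : ℕ) (f g : Equiv.Perm (Fin I) → ℝ) : ℝ :=
  swExp I (fun σ => (f σ - swExp I f) * (g σ - swExp I g))

/-- Treatment indicator: cluster `i` is treated in period `j` iff its position
`σ(i) + 1` (in `{1,…,I}`) is at most the treated count `T j`. -/
def swZ (I : ℕ) (T : ℕ → ℕ) (σ : Equiv.Perm (Fin I)) (i : Fin I) (j : ℕ) : ℕ :=
  if (σ i : ℕ) < T j then 1 else 0

/-- Cluster-level propensity score `e_j = I_j / I`. -/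
def swE (I : ℕ) (T : ℕ → ℕ) (j : ℕ) : ℝ := (T j : ℝ) / (I : ℝ)

/-- Joint probability that both cluster-periods are treated. -/
def swE11 (I : ℕ) (T : ℕ → ℕ) (p q : Fin I × ℕ) : ℝ :=
  swProb I (fun σ => swZ I T σ p.1 p.2 = 1 ∧ swZ I T σ q.1 q.2 = 1)

/-- Joint probability that both cluster-periods are untreated. -/
def swE00 (I : ℕ) (T : ℕ → ℕ) (p q : Fin I × ℕ) : ℝ :=
  swProb I (fun σ => swZ I T σ p.1 p.2 = 0 ∧ swZ I T σ q.1 q.2 = 0)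

/-- Joint probability that the first cluster-period is treated and the second untreated. -/
def swE10 (I : ℕ) (T : ℕ → ℕ) (p q : Fin I × ℕ) : ℝ :=
  swProb I (fun σ => swZ I T σ p.1 p.2 = 1 ∧ swZ I T σ q.1 q.2 = 0)

/-- Treated-arm Horvitz–Thompson estimator. -/
def tauHat1 (I J : ℕ) (T : ℕ → ℕ) (N : ℝ) (r1 : Fin I → ℕ → ℝ)
    (σ : Equiv.Perm (Fin I)) : ℝ :=
  (1 / N) * ∑ i : Fin I, ∑ j ∈ Finset.Icc 1 J, (swZ I T σ i j : ℝ) * r1 i j / swE I T j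

/-- Control-arm Horvitz–Thompson estimator. -/
def tauHat0 (I J : ℕ) (T : ℕ → ℕ) (N : ℝ) (r0 : Fin I → ℕ → ℝ)
    (σ : Equiv.Perm (Fin I)) : ℝ :=
  (1 / N) * ∑ i : Fin I, ∑ j ∈ Finset.Icc 1 J,
    (1 - (swZ I T σ i j : ℝ)) * r0 i j / (1 - swE I T j)

/-- Horvitz–Thompson estimator of the residualized average treatment effect. -/
def tauHatD (I J : ℕ) (T : ℕ → ℕ) (N : ℝ) (r1 r0 : Fin I → ℕ → ℝ)
    (σ : Equiv.Perm (Fin I)) : ℝ :=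
  (1 / N) * ∑ i : Fin I, ∑ j ∈ Finset.Icc 1 J,
    ((swZ I T σ i j : ℝ) * r1 i j / swE I T j
      - (1 - (swZ I T σ i j : ℝ)) * r0 i j / (1 - swE I T j))

/-- Treated-arm variance estimator. -/
def varHat1 (I J : ℕ) (T : ℕ → ℕ) (N : ℝ) (r1 : Fin I → ℕ → ℝ)
    (σ : Equiv.Perm (Fin I)) : ℝ :=
  (1 / N ^ 2) *
    ((∑ p ∈ Finset.univ ×ˢ Finset.Icc 1 J,
        (swZ I T σ p.1 p.2 : ℝ) * ((1 - swE I T p.2) / (swE I T p.2) ^ 2) * (r1 p.1 p.2) ^ 2)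
      + (∑ p ∈ Finset.univ ×ˢ Finset.Icc 1 J, ∑ q ∈ Finset.univ ×ˢ Finset.Icc 1 J,
          if p ≠ q ∧ 0 < swE11 I T p q then
            (swZ I T σ p.1 p.2 : ℝ) * (swZ I T σ q.1 q.2 : ℝ) *
              ((swE11 I T p q - swE I T p.2 * swE I T q.2) /
                (swE11 I T p q * swE I T p.2 * swE I T q.2)) *
              r1 p.1 p.2 * r1 q.1 q.2
          else 0)
      + (∑ p ∈ Finset.univ ×ˢ Finset.Icc 1 J, ∑ q ∈ Finset.univ ×ˢ Finset.Icc 1 J,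
          if p ≠ q ∧ swE11 I T p q = 0 then
            (swZ I T σ p.1 p.2 : ℝ) * (r1 p.1 p.2) ^ 2 / (2 * swE I T p.2)
              + (swZ I T σ q.1 q.2 : ℝ) * (r1 q.1 q.2) ^ 2 / (2 * swE I T q.2)
          else 0))

/-- Control-arm variance estimator. -/
def varHat0 (I J : ℕ) (T : ℕ → ℕ) (N : ℝ) (r0 : Fin I → ℕ → ℝ)
    (σ : Equiv.Perm (Fin I)) : ℝ :=
  (1 / N ^ 2) *
    ((∑ p ∈ Finset.univ ×ˢ Finset.Icc 1 J,
        (1 - (swZ I T σ p.1 p.2 : ℝ)) * (swE I T p.2 / (1 - swE I T p.2) ^ 2) * (r0 p.1 p.2) ^ 2)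
      + (∑ p ∈ Finset.univ ×ˢ Finset.Icc 1 J, ∑ q ∈ Finset.univ ×ˢ Finset.Icc 1 J,
          if p ≠ q ∧ 0 < swE00 I T p q then
            (1 - (swZ I T σ p.1 p.2 : ℝ)) * (1 - (swZ I T σ q.1 q.2 : ℝ)) *
              ((swE00 I T p q - (1 - swE I T p.2) * (1 - swE I T q.2)) /
                (swE00 I T p q * (1 - swE I T p.2) * (1 - swE I T q.2))) *
              r0 p.1 p.2 * r0 q.1 q.2
          else 0)
      + (∑ p ∈ Finset.univ ×ˢ Finset.Icc 1 J, ∑ q ∈ Finset.univ ×ˢ Finset.Icc 1 J,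
          if p ≠ q ∧ swE00 I T p q = 0 then
            (1 - (swZ I T σ p.1 p.2 : ℝ)) * (r0 p.1 p.2) ^ 2 / (2 * (1 - swE I T p.2))
              + (1 - (swZ I T σ q.1 q.2 : ℝ)) * (r0 q.1 q.2) ^ 2 / (2 * (1 - swE I T q.2))
          else 0))

/-- Covariance estimator. -/
def covHat (I J : ℕ) (T : ℕ → ℕ) (N : ℝ) (r1 r0 : Fin I → ℕ → ℝ)
    (σ : Equiv.Perm (Fin I)) : ℝ :=
  -(1 / N ^ 2) *
      (∑ p ∈ Finset.univ ×ˢ Finset.Icc 1 J, ∑ q ∈ Finset.univ ×ˢ Finset.Icc 1 J,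
        if swE10 I T p q = 0 then
          (swZ I T σ p.1 p.2 : ℝ) * (r1 p.1 p.2) ^ 2 / (2 * swE I T p.2)
            + (1 - (swZ I T σ q.1 q.2 : ℝ)) * (r0 q.1 q.2) ^ 2 / (2 * (1 - swE I T q.2))
        else 0)
    + (1 / N ^ 2) *
      (∑ p ∈ Finset.univ ×ˢ Finset.Icc 1 J, ∑ q ∈ Finset.univ ×ˢ Finset.Icc 1 J,
        if p ≠ q ∧ 0 < swE10 I T p q then
          (swZ I T σ p.1 p.2 : ℝ) * (1 - (swZ I T σ q.1 q.2 : ℝ)) *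
            ((swE10 I T p q - swE I T p.2 * (1 - swE I T q.2)) /
              (swE10 I T p q * swE I T p.2 * (1 - swE I T q.2))) *
            r1 p.1 p.2 * r0 q.1 q.2
        else 0)

/-- The adoption period of a cluster placed `l`-th in line:
`P_l = min { j ∈ {1,…,J} : l ≤ I_j }` if `l ≤ I_J`, and `J + 1` otherwise. -/
def swP (J : ℕ) (T : ℕ → ℕ) (l : ℕ) : ℕ :=
  if l ≤ T J then sInf {j | 1 ≤ j ∧ j ≤ J ∧ l ≤ T j} else J + 1

/-- The combinatorial matrix entry `c(i, l)`. -/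
def swC (I J : ℕ) (T : ℕ → ℕ) (N : ℝ) (r1 r0 : Fin I → ℕ → ℝ)
    (i : Fin I) (l : ℕ) : ℝ :=
  (1 / N) * ((∑ j ∈ Finset.Icc (swP J T l) J, r1 i j / swE I T j)
    - ∑ j ∈ Finset.Icc 1 (swP J T l - 1), r0 i j / (1 - swE I T j))


-- helpers
lemma swFact_ne (I : ℕ) : ((Nat.factorial I : ℝ)) ≠ 0 := by
  exact_mod_cast (Nat.factorial_pos I).ne'

lemma swExp_congr (I : ℕ) (f g : Equiv.Perm (Fin I) → ℝ) (h : ∀ σ, f σ = g σ) :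
    swExp I f = swExp I g := by
  unfold swExp; rw [funext h]

lemma swExp_add (I : ℕ) (f g : Equiv.Perm (Fin I) → ℝ) :
    swExp I (fun σ => f σ + g σ) = swExp I f + swExp I g := by
  simp [swExp, Finset.sum_add_distrib, add_div]

lemma swExp_sub (I : ℕ) (f g : Equiv.Perm (Fin I) → ℝ) :
    swExp I (fun σ => f σ - g σ) = swExp I f - swExp I g := by
  simp [swExp, Finset.sum_sub_distrib, sub_div]

lemma swExp_const (I : ℕ) (c : ℝ) : swExp I (fun _ => c) = c := by
  simp [swExp, Finset.sum_const, Finset.card_univ, Fintype.card_perm, Fintype.card_fin]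
  rw [mul_comm, mul_div_assoc, div_self (swFact_ne I), mul_one]

lemma swExp_const_mul (I : ℕ) (c : ℝ) (f : Equiv.Perm (Fin I) → ℝ) :
    swExp I (fun σ => c * f σ) = c * swExp I f := by
  simp [swExp, ← Finset.mul_sum, mul_div_assoc]

lemma swExp_mul_const (I : ℕ) (c : ℝ) (f : Equiv.Perm (Fin I) → ℝ) :
    swExp I (fun σ => f σ * c) = swExp I f * c := by
  simp only [mul_comm _ c, swExp_const_mul]

lemma swExp_div_const (I : ℕ) (c : ℝ) (f : Equiv.Perm (Fin I) → ℝ) :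
    swExp I (fun σ => f σ / c) = swExp I f / c := by
  simp only [div_eq_mul_inv, swExp_mul_const]

lemma swExp_sum (I : ℕ) {α : Type*} (s : Finset α) (f : α → Equiv.Perm (Fin I) → ℝ) :
    swExp I (fun σ => ∑ x ∈ s, f x σ) = ∑ x ∈ s, swExp I (f x) := by
  unfold swExp; rw [Finset.sum_comm, Finset.sum_div]

lemma swExp_indicator (I : ℕ) (p : Equiv.Perm (Fin I) → Prop) :
    swExp I (fun σ => if p σ then (1:ℝ) else 0) = swProb I p := by
  unfold swExp swProb
  congr 1
  rw [Finset.sum_boole]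

lemma swProb_nonneg (I : ℕ) (p : Equiv.Perm (Fin I) → Prop) : 0 ≤ swProb I p := by
  unfold swProb; positivity

lemma swCov_eq (I : ℕ) (f g : Equiv.Perm (Fin I) → ℝ) :
    swCov I f g = swExp I (fun σ => f σ * g σ) - swExp I f * swExp I g := by
  have h : swCov I f g = swExp I (fun σ => (f σ * g σ - swExp I f * g σ) -
      (swExp I g * f σ - swExp I f * swExp I g)) :=
    swExp_congr I _ _ (fun σ => by ring)
  rw [h, swExp_sub, swExp_sub, swExp_sub, swExp_const_mul, swExp_const_mul,
    swExp_const I (swExp I f * swExp I g)]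
  ring

lemma card_fiber_const (I : ℕ) (i a b : Fin I) :
    (univ.filter fun σ : Equiv.Perm (Fin I) => σ i = a).card
      = (univ.filter fun σ : Equiv.Perm (Fin I) => σ i = b).card := by
  apply Finset.card_equiv (Equiv.mulLeft (Equiv.swap a b))
  intro σ
  simp only [Finset.mem_filter, Finset.mem_univ, true_and, Equiv.coe_mulLeft,
    Equiv.Perm.mul_apply]
  constructor
  · rintro rfl; exact Equiv.swap_apply_left _ _
  · intro h
    have : Equiv.swap a b (σ i) = Equiv.swap a b a := by rw [h, Equiv.swap_apply_left]
    exact (Equiv.swap a b).injective this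

lemma sum_fiber (I : ℕ) (i : Fin I) :
    ∑ a : Fin I, (univ.filter fun σ : Equiv.Perm (Fin I) => σ i = a).card = I.factorial := by
  rw [← Finset.card_eq_sum_card_fiberwise (f := fun σ : Equiv.Perm (Fin I) => σ i)
    (t := Finset.univ) (fun σ _ => Finset.mem_univ _)]
  simp [Finset.card_univ, Fintype.card_perm, Fintype.card_fin]

lemma card_fiber_real (I : ℕ) (i a : Fin I) :
    ((univ.filter fun σ : Equiv.Perm (Fin I) => σ i = a).card : ℝ)
      = (I.factorial : ℝ) / I := by
  have hI : 0 < I := i.pos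
  have h := sum_fiber I i
  rw [Finset.sum_congr rfl (fun b _ => card_fiber_const I i b a), Finset.sum_const,
    Finset.card_univ, Fintype.card_fin, smul_eq_mul] at h
  have h' : (I : ℝ) * ((univ.filter fun σ : Equiv.Perm (Fin I) => σ i = a).card : ℝ)
      = (I.factorial : ℝ) := by exact_mod_cast congrArg (fun n : ℕ => (n : ℝ)) h
  have hI' : (I : ℝ) ≠ 0 := by positivity
  field_simp
  linarith [h']

lemma card_lt (I n : ℕ) (h : n ≤ I) :
    (univ.filter fun a : Fin I => (a : ℕ) < n).card = n := by
  have key : (univ.filter fun a : Fin I => (a : ℕ) < n).card = (univ : Finset (Fin n)).card := by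
    apply Finset.card_bij (fun (a : Fin I) (ha : a ∈ univ.filter fun a : Fin I => (a:ℕ) < n) =>
      (⟨(a : ℕ), (Finset.mem_filter.mp ha).2⟩ : Fin n))
    · intro a ha; exact Finset.mem_univ _
    · intro a1 h1 a2 h2 hh
      exact Fin.ext (congrArg (fun x : Fin n => (x : ℕ)) hh)
    · intro b _
      exact ⟨⟨(b : ℕ), lt_of_lt_of_le b.isLt h⟩,
        Finset.mem_filter.mpr ⟨Finset.mem_univ _, b.isLt⟩, rfl⟩
  simpa using key

lemma swProb_eq (I : ℕ) (p : Equiv.Perm (Fin I) → Prop) [inst : DecidablePred p] :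
    swProb I p = ((Finset.univ.filter p).card : ℝ) / (I.factorial : ℝ) := by
  unfold swProb
  rw [@Finset.filter_congr _ p p (fun σ => Classical.propDecidable (p σ)) inst Finset.univ
    (fun x _ => Iff.rfl)]

lemma swExp_Z (I : ℕ) (T : ℕ → ℕ) (i : Fin I) (j : ℕ) (hT : T j ≤ I) :
    swExp I (fun σ => (swZ I T σ i j : ℝ)) = swE I T j := by
  have hI : 0 < I := i.pos
  have h1 : swExp I (fun σ => (swZ I T σ i j : ℝ))
      = swProb I (fun σ => (σ i : ℕ) < T j) := by
    rw [← swExp_indicator]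
    apply swExp_congr
    intro σ
    unfold swZ
    by_cases h : (σ i : ℕ) < T j <;> simp [h]
  have h2 : (univ.filter fun σ : Equiv.Perm (Fin I) => (σ i : ℕ) < T j).card
      = ∑ a ∈ (univ.filter fun a : Fin I => (a : ℕ) < T j),
          ((univ.filter fun σ : Equiv.Perm (Fin I) => (σ i : ℕ) < T j).filter
            fun σ => σ i = a).card := by
    apply Finset.card_eq_sum_card_fiberwise
    intro σ hσ
    simp only [Finset.mem_filter, Finset.mem_univ, true_and] at hσ ⊢
    simpa using hσ
  have h3 : ∀ a ∈ (univ.filter fun a : Fin I => (a : ℕ) < T j),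
      ((univ.filter fun σ : Equiv.Perm (Fin I) => (σ i : ℕ) < T j).filter fun σ => σ i = a)
        = univ.filter fun σ : Equiv.Perm (Fin I) => σ i = a := by
    intro a ha
    simp only [Finset.mem_filter, Finset.mem_univ, true_and] at ha
    ext σ
    simp only [Finset.mem_filter, Finset.mem_univ, true_and]
    constructor
    · rintro ⟨_, h⟩; exact h
    · intro h; exact ⟨by rw [h]; exact ha, h⟩
  rw [h1, swProb_eq I _]
  unfold swE
  rw [h2, Finset.sum_congr rfl (fun a ha => congrArg Finset.card (h3 a ha)), Nat.cast_sum]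
  rw [Finset.sum_congr rfl (fun a _ => card_fiber_real I i a), Finset.sum_const,
    card_lt I (T j) hT, nsmul_eq_mul]
  have hI' : (I : ℝ) ≠ 0 := by positivity
  field_simp

lemma swExp_oneZ (I : ℕ) (T : ℕ → ℕ) (i : Fin I) (j : ℕ) (hT : T j ≤ I) :
    swExp I (fun σ => 1 - (swZ I T σ i j : ℝ)) = 1 - swE I T j := by
  rw [swExp_sub, swExp_const, swExp_Z I T i j hT]

lemma swExp_Z10 (I : ℕ) (T : ℕ → ℕ) (p q : Fin I × ℕ) :
    swExp I (fun σ => (swZ I T σ p.1 p.2 : ℝ) * (1 - (swZ I T σ q.1 q.2 : ℝ)))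
      = swE10 I T p q := by
  unfold swE10
  rw [← swExp_indicator]
  apply swExp_congr
  intro σ
  unfold swZ
  by_cases h1 : (σ p.1 : ℕ) < T p.2 <;> by_cases h2 : (σ q.1 : ℕ) < T q.2 <;> simp [h1, h2]

lemma swE10_self (I : ℕ) (T : ℕ → ℕ) (p : Fin I × ℕ) : swE10 I T p p = 0 := by
  unfold swE10 swProb
  have h : ∀ σ : Equiv.Perm (Fin I), ¬(swZ I T σ p.1 p.2 = 1 ∧ swZ I T σ p.1 p.2 = 0) := by
    rintro σ ⟨h1, h2⟩
    rw [h1] at h2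
    exact one_ne_zero h2
  simp [h]


theorem statement16
    (I J : ℕ) (hI : 2 ≤ I) (hJ : 1 ≤ J)
    (T : ℕ → ℕ)
    (hmono : ∀ j j', 1 ≤ j → j ≤ j' → j' ≤ J → T j ≤ T j')
    (hlb : ∀ j, 1 ≤ j → j ≤ J → 1 ≤ T j)
    (hub : ∀ j, 1 ≤ j → j ≤ J → T j ≤ I - 1)
    (N : ℝ) (hN : 0 < N) (r1 r0 : Fin I → ℕ → ℝ) :
    swExp I (covHat I J T N r1 r0)
      ≤ swCov I (tauHat1 I J T N r1) (tauHat0 I J T N r0) := by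

  have hIpos : (0:ℝ) < I := by
    have : 0 < I := by omega
    exact_mod_cast this
  have hN2 : (0:ℝ) ≤ 1 / N ^ 2 := by positivity
  -- basic bounds on propensity scores
  have hmem : ∀ p : Fin I × ℕ, p ∈ Finset.univ ×ˢ Finset.Icc 1 J → 1 ≤ p.2 ∧ p.2 ≤ J := by
    intro p hp
    rw [Finset.mem_product, Finset.mem_Icc] at hp
    exact hp.2
  have hTle : ∀ p : Fin I × ℕ, p ∈ Finset.univ ×ˢ Finset.Icc 1 J → T p.2 ≤ I := by
    intro p hp
    have h := hub p.2 (hmem p hp).1 (hmem p hp).2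
    omega
  have hepos : ∀ p : Fin I × ℕ, p ∈ Finset.univ ×ˢ Finset.Icc 1 J → 0 < swE I T p.2 := by
    intro p hp
    have h := hlb p.2 (hmem p hp).1 (hmem p hp).2
    unfold swE
    apply div_pos _ hIpos
    exact_mod_cast h
  have helt : ∀ p : Fin I × ℕ, p ∈ Finset.univ ×ˢ Finset.Icc 1 J → swE I T p.2 < 1 := by
    intro p hp
    have h := hub p.2 (hmem p hp).1 (hmem p hp).2
    unfold swE
    rw [div_lt_one hIpos]
    have : T p.2 < I := by omega
    exact_mod_cast this
  have hZ : ∀ p : Fin I × ℕ, p ∈ Finset.univ ×ˢ Finset.Icc 1 J →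
      swExp I (fun σ => (swZ I T σ p.1 p.2 : ℝ)) = swE I T p.2 := by
    intro p hp; exact swExp_Z I T p.1 p.2 (hTle p hp)
  have hZ' : ∀ p : Fin I × ℕ, p ∈ Finset.univ ×ˢ Finset.Icc 1 J →
      swExp I (fun σ => 1 - (swZ I T σ p.1 p.2 : ℝ)) = 1 - swE I T p.2 := by
    intro p hp; exact swExp_oneZ I T p.1 p.2 (hTle p hp)
  -- expectation of tauHat1
  have ht1 : swExp I (tauHat1 I J T N r1)
      = (1 / N) * ∑ p ∈ Finset.univ ×ˢ Finset.Icc 1 J, r1 p.1 p.2 := by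
    have e1 : ∀ σ, tauHat1 I J T N r1 σ
        = (1 / N) * ∑ p ∈ Finset.univ ×ˢ Finset.Icc 1 J,
            (r1 p.1 p.2 / swE I T p.2) * (swZ I T σ p.1 p.2 : ℝ) := by
      intro σ
      simp only [tauHat1]
      rw [Finset.sum_product]
      congr 1
      apply Finset.sum_congr rfl; intro i _
      apply Finset.sum_congr rfl; intro j _
      ring
    rw [swExp_congr I _ _ e1, swExp_const_mul, swExp_sum]
    congr 1
    apply Finset.sum_congr rfl
    intro p hp
    rw [swExp_const_mul, hZ p hp, div_mul_cancel₀]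
    exact (hepos p hp).ne'
  -- expectation of tauHat0
  have ht0 : swExp I (tauHat0 I J T N r0)
      = (1 / N) * ∑ p ∈ Finset.univ ×ˢ Finset.Icc 1 J, r0 p.1 p.2 := by
    have e1 : ∀ σ, tauHat0 I J T N r0 σ
        = (1 / N) * ∑ p ∈ Finset.univ ×ˢ Finset.Icc 1 J,
            (r0 p.1 p.2 / (1 - swE I T p.2)) * (1 - (swZ I T σ p.1 p.2 : ℝ)) := by
      intro σ
      simp only [tauHat0]
      rw [Finset.sum_product]
      congr 1
      apply Finset.sum_congr rfl; intro i _
      apply Finset.sum_congr rfl; intro j _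
      ring
    rw [swExp_congr I _ _ e1, swExp_const_mul, swExp_sum]
    congr 1
    apply Finset.sum_congr rfl
    intro p hp
    rw [swExp_const_mul, hZ' p hp, div_mul_cancel₀]
    have := helt p hp
    linarith
  -- expectation of the product
  have hprod : swExp I (fun σ => tauHat1 I J T N r1 σ * tauHat0 I J T N r0 σ)
      = (1 / N ^ 2) * ∑ p ∈ Finset.univ ×ˢ Finset.Icc 1 J,
          ∑ q ∈ Finset.univ ×ˢ Finset.Icc 1 J,
            (r1 p.1 p.2 / swE I T p.2) * (r0 q.1 q.2 / (1 - swE I T q.2))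
              * swE10 I T p q := by
    have e2 : ∀ σ, tauHat1 I J T N r1 σ * tauHat0 I J T N r0 σ
        = (1 / N ^ 2) * ∑ p ∈ Finset.univ ×ˢ Finset.Icc 1 J,
            ∑ q ∈ Finset.univ ×ˢ Finset.Icc 1 J,
              ((r1 p.1 p.2 / swE I T p.2) * (r0 q.1 q.2 / (1 - swE I T q.2)))
                * ((swZ I T σ p.1 p.2 : ℝ) * (1 - (swZ I T σ q.1 q.2 : ℝ))) := by
      intro σ
      simp only [tauHat1, tauHat0]
      rw [show ∀ A B : ℝ, (1/N) * A * ((1/N) * B) = (1/N^2) * (A * B) from by intros; ring]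
      congr 1
      rw [← Finset.sum_product', ← Finset.sum_product', Finset.sum_mul_sum]
      apply Finset.sum_congr rfl; intro p _
      apply Finset.sum_congr rfl; intro q _
      ring
    rw [swExp_congr I _ _ e2, swExp_const_mul, swExp_sum]
    congr 1
    apply Finset.sum_congr rfl
    intro p _
    rw [swExp_sum]
    apply Finset.sum_congr rfl
    intro q _
    rw [swExp_const_mul, swExp_Z10 I T p q]
  -- the covariance
  have hCov : swCov I (tauHat1 I J T N r1) (tauHat0 I J T N r0)
      = (1 / N ^ 2) * ∑ p ∈ Finset.univ ×ˢ Finset.Icc 1 J,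
          ∑ q ∈ Finset.univ ×ˢ Finset.Icc 1 J,
            ((r1 p.1 p.2 / swE I T p.2) * (r0 q.1 q.2 / (1 - swE I T q.2))
                * swE10 I T p q
              - r1 p.1 p.2 * r0 q.1 q.2) := by
    rw [swCov_eq, hprod, ht1, ht0]
    rw [show (1 / N * ∑ p ∈ Finset.univ ×ˢ Finset.Icc 1 J, r1 p.1 p.2)
          * (1 / N * ∑ q ∈ Finset.univ ×ˢ Finset.Icc 1 J, r0 q.1 q.2)
        = (1 / N ^ 2) * ∑ p ∈ Finset.univ ×ˢ Finset.Icc 1 J,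
            ∑ q ∈ Finset.univ ×ˢ Finset.Icc 1 J, r1 p.1 p.2 * r0 q.1 q.2 from by
      rw [← Finset.sum_mul_sum]; ring]
    rw [← mul_sub, ← Finset.sum_sub_distrib]
    congr 1
    apply Finset.sum_congr rfl
    intro p _
    rw [← Finset.sum_sub_distrib]
  -- expectation of covHat
  have hEch : swExp I (covHat I J T N r1 r0)
      = (1 / N ^ 2) * ∑ p ∈ Finset.univ ×ˢ Finset.Icc 1 J,
          ∑ q ∈ Finset.univ ×ˢ Finset.Icc 1 J,
            ((if p ≠ q ∧ 0 < swE10 I T p q then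
                swE10 I T p q *
                  ((swE10 I T p q - swE I T p.2 * (1 - swE I T q.2)) /
                    (swE10 I T p q * swE I T p.2 * (1 - swE I T q.2))) *
                  r1 p.1 p.2 * r0 q.1 q.2
              else 0)
            - (if swE10 I T p q = 0 then
                r1 p.1 p.2 ^ 2 / 2 + r0 q.1 q.2 ^ 2 / 2
              else 0)) := by
    have e3 : ∀ σ, covHat I J T N r1 r0 σ
        = (1 / N ^ 2) * ∑ p ∈ Finset.univ ×ˢ Finset.Icc 1 J,
            ∑ q ∈ Finset.univ ×ˢ Finset.Icc 1 J,
              ((if p ≠ q ∧ 0 < swE10 I T p q then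
                  (swZ I T σ p.1 p.2 : ℝ) * (1 - (swZ I T σ q.1 q.2 : ℝ)) *
                    ((swE10 I T p q - swE I T p.2 * (1 - swE I T q.2)) /
                      (swE10 I T p q * swE I T p.2 * (1 - swE I T q.2))) *
                    r1 p.1 p.2 * r0 q.1 q.2
                else 0)
              - (if swE10 I T p q = 0 then
                  (swZ I T σ p.1 p.2 : ℝ) * r1 p.1 p.2 ^ 2 / (2 * swE I T p.2)
                    + (1 - (swZ I T σ q.1 q.2 : ℝ)) * r0 q.1 q.2 ^ 2 /
                        (2 * (1 - swE I T q.2))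
                else 0)) := by
      intro σ
      simp only [covHat]
      rw [show ∀ A B : ℝ, -(1/N^2) * A + (1/N^2) * B = (1/N^2) * (B - A) from by
        intros; ring]
      congr 1
      rw [← Finset.sum_sub_distrib]
      apply Finset.sum_congr rfl
      intro p _
      rw [← Finset.sum_sub_distrib]
    rw [swExp_congr I _ _ e3, swExp_const_mul, swExp_sum]
    congr 1
    apply Finset.sum_congr rfl
    intro p hp
    rw [swExp_sum]
    apply Finset.sum_congr rfl
    intro q hq
    rw [swExp_sub]
    congr 1
    · by_cases hc : p ≠ q ∧ 0 < swE10 I T p q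
      · have e4 : ∀ σ : Equiv.Perm (Fin I),
            (if p ≠ q ∧ 0 < swE10 I T p q then
              (swZ I T σ p.1 p.2 : ℝ) * (1 - (swZ I T σ q.1 q.2 : ℝ)) *
                  ((swE10 I T p q - swE I T p.2 * (1 - swE I T q.2)) /
                    (swE10 I T p q * swE I T p.2 * (1 - swE I T q.2))) *
                  r1 p.1 p.2 * r0 q.1 q.2
            else 0)
            = ((swZ I T σ p.1 p.2 : ℝ) * (1 - (swZ I T σ q.1 q.2 : ℝ))) *
                (((swE10 I T p q - swE I T p.2 * (1 - swE I T q.2)) /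
                  (swE10 I T p q * swE I T p.2 * (1 - swE I T q.2))) *
                r1 p.1 p.2 * r0 q.1 q.2) := by
          intro σ; rw [if_pos hc]; ring
        rw [swExp_congr I _ _ e4, swExp_mul_const, swExp_Z10 I T p q, if_pos hc]
        ring
      · have e4 : ∀ σ : Equiv.Perm (Fin I),
            (if p ≠ q ∧ 0 < swE10 I T p q then
              (swZ I T σ p.1 p.2 : ℝ) * (1 - (swZ I T σ q.1 q.2 : ℝ)) *
                  ((swE10 I T p q - swE I T p.2 * (1 - swE I T q.2)) /
                    (swE10 I T p q * swE I T p.2 * (1 - swE I T q.2))) *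
                  r1 p.1 p.2 * r0 q.1 q.2
            else 0) = (0:ℝ) := fun σ => if_neg hc
        rw [swExp_congr I _ _ e4, swExp_const, if_neg hc]
    · by_cases hc : swE10 I T p q = 0
      · have e5 : ∀ σ : Equiv.Perm (Fin I),
            (if swE10 I T p q = 0 then
              (swZ I T σ p.1 p.2 : ℝ) * r1 p.1 p.2 ^ 2 / (2 * swE I T p.2)
                + (1 - (swZ I T σ q.1 q.2 : ℝ)) * r0 q.1 q.2 ^ 2 /
                    (2 * (1 - swE I T q.2))
            else 0)
            = (swZ I T σ p.1 p.2 : ℝ) * r1 p.1 p.2 ^ 2 / (2 * swE I T p.2)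
                + (1 - (swZ I T σ q.1 q.2 : ℝ)) * r0 q.1 q.2 ^ 2 /
                    (2 * (1 - swE I T q.2)) := fun σ => if_pos hc
        rw [swExp_congr I _ _ e5, if_pos hc]
        have hep := hepos p hp
        have heq := helt q hq
        rw [swExp_add, swExp_div_const, swExp_div_const, swExp_mul_const,
          swExp_mul_const, hZ p hp, hZ' q hq]
        have h1 : swE I T p.2 ≠ 0 := hep.ne'
        have h2 : (1 : ℝ) - swE I T q.2 ≠ 0 := by
          have := helt q hq
          intro hh; rw [sub_eq_zero] at hh; exact absurd hh.symm (ne_of_lt this)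
        field_simp
      · have e5 : ∀ σ : Equiv.Perm (Fin I),
            (if swE10 I T p q = 0 then
              (swZ I T σ p.1 p.2 : ℝ) * r1 p.1 p.2 ^ 2 / (2 * swE I T p.2)
                + (1 - (swZ I T σ q.1 q.2 : ℝ)) * r0 q.1 q.2 ^ 2 /
                    (2 * (1 - swE I T q.2))
            else 0) = (0:ℝ) := fun σ => if_neg hc
        rw [swExp_congr I _ _ e5, swExp_const, if_neg hc]
  -- conclude
  rw [hEch, hCov]
  apply mul_le_mul_of_nonneg_left _ hN2
  apply Finset.sum_le_sum
  intro p hp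
  apply Finset.sum_le_sum
  intro q hq
  have hep := hepos p hp
  have heq' := helt q hq
  have hb : (0:ℝ) < 1 - swE I T q.2 := by linarith
  by_cases hc : p ≠ q ∧ 0 < swE10 I T p q
  · rw [if_pos hc, if_neg (by simp [hc.2.ne'])]
    apply le_of_eq
    rw [sub_zero]
    have hA : swE10 I T p q ≠ 0 := hc.2.ne'
    field_simp
  · rw [if_neg hc]
    have hA : swE10 I T p q = 0 := by
      rcases not_and_or.mp hc with h | h
      · have hpq : p = q := not_not.mp h
        subst hpq
        exact swE10_self I T p
      · have h0 : 0 ≤ swE10 I T p q :=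
          swProb_nonneg I (fun σ => swZ I T σ p.1 p.2 = 1 ∧ swZ I T σ q.1 q.2 = 0)
        have h' : ¬ 0 < swE10 I T p q := h
        by_contra hne
        exact h' (lt_of_le_of_ne h0 (Ne.symm hne))
    rw [if_pos hA, hA]
    nlinarith [sq_nonneg (r1 p.1 p.2 - r0 q.1 q.2)]
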